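/- Let R be a unital associative ring, n ≥ 1, and let Ψ = J₂ ∘ Φ ∘ J₂. Then Ψ and Φ⁻¹ have the same domain, which both map bijectively onto dom(Φ), and Ψ(A) ∼ Φ⁻¹(A) for every A ∈ dom(Ψ) = dom(Φ⁻¹). Consequently Ψ(A) ∼ Φ⁻¹(A) ∼ J⁻¹(A) for every such A. -/

import Mathlib

open Matrix

section KontsevichDefs

variable {R : Type*} [Ring R]

/-- `J₂`: the transposed Hadamard inverse, `J₂(M)_{jk} = (M_{kj})⁻¹`
(with `Ring.inverse`, which is the two-sided inverse on units and `0` elsewhere). -/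
noncomputable def J2 {m : Type*} (M : Matrix m m R) : Matrix m m R :=
  Matrix.of fun j k => Ring.inverse (M k j)

variable {m : Type*} [Fintype m] [DecidableEq m]

/-- `J = J₂ ∘ J₁`, where `J₁(M) = M⁻¹` is the usual matrix inverse. -/
noncomputable def Jmap (M : Matrix m m R) : Matrix m m R := J2 (Ring.inverse M)

/-- `J⁻¹ = J₁ ∘ J₂`. -/
noncomputable def JinvMap (M : Matrix m m R) : Matrix m m R := Ring.inverse (J2 M)

/-- `dom(J)`: `M` invertible and all entries of `M⁻¹` invertible. -/
def domJ (M : Matrix m m R) : Prop :=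
  IsUnit M ∧ ∀ j k, IsUnit (Ring.inverse M j k)

/-- `dom(J⁻¹)`: all entries of `M` invertible and `J₂(M)` invertible. -/
def domJinv (M : Matrix m m R) : Prop :=
  (∀ j k, IsUnit (M j k)) ∧ IsUnit (J2 M)

/-- `dom(Jⁿ)` defined recursively: `M ∈ dom(Jⁿ⁺¹)` iff `M ∈ dom(J)` and `J(M) ∈ dom(Jⁿ)`. -/
def domJpow : ℕ → Matrix m m R → Prop
  | 0, _ => True
  | n + 1, M => domJ M ∧ domJpow n (Jmap M)

/-- `A ∼ B`: `B = D₁⁻¹ A D₂` for diagonal matrices `D₁, D₂` with invertible diagonal entries. -/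
def simRel (A B : Matrix m m R) : Prop :=
  ∃ d₁ d₂ : m → Rˣ,
    B = Matrix.diagonal (fun i => (((d₁ i)⁻¹ : Rˣ) : R)) * A *
        Matrix.diagonal (fun i => ((d₂ i : Rˣ) : R))

/-- entrywise conjugation `x⁻¹ A x` by an invertible ring element. -/
def conjEntry {m' : Type*} (x : Rˣ) (A : Matrix m' m' R) : Matrix m' m' R :=
  Matrix.of fun j k => ((x⁻¹ : Rˣ) : R) * A j k * (x : R)

/-- `M̂ₙ(R)`: first row and first column consist entirely of `1`'s. -/
def Mhat {m' : Type*} [Zero m'] (A : Matrix m' m' R) : Prop :=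
  ∀ k, A 0 k = 1 ∧ A k 0 = 1

/-- `Λ^L(A)_{jk} = a₁₁ a_{j1}⁻¹ a_{jk} a_{1k}⁻¹`. -/
noncomputable def LamL {m' : Type*} [Zero m'] (A : Matrix m' m' R) : Matrix m' m' R :=
  Matrix.of fun j k => A 0 0 * Ring.inverse (A j 0) * A j k * Ring.inverse (A 0 k)

/-- `Λ^R(A)_{jk} = a_{j1}⁻¹ a_{jk} a_{1k}⁻¹ a₁₁`. -/
noncomputable def LamR {m' : Type*} [Zero m'] (A : Matrix m' m' R) : Matrix m' m' R :=
  Matrix.of fun j k => Ring.inverse (A j 0) * A j k * Ring.inverse (A 0 k) * A 0 0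

/-- `Φ(A) = J₂(Λ^L(A⁻¹))`. -/
noncomputable def Phi [Zero m] (A : Matrix m m R) : Matrix m m R := J2 (LamL (Ring.inverse A))

/-- `dom(Φ)`: `A ∈ M̂ₙ(R)`, all entries of `A` invertible, `A` invertible,
all entries of `A⁻¹` invertible. -/
def domPhi [Zero m] (A : Matrix m m R) : Prop :=
  Mhat A ∧ (∀ j k, IsUnit (A j k)) ∧ IsUnit A ∧ ∀ j k, IsUnit (Ring.inverse A j k)

/-- `Φ⁻¹(B) = Λ^R(J⁻¹(B)) = Λ^R((J₂ B)⁻¹)`. -/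
noncomputable def PhiInv [Zero m] (B : Matrix m m R) : Matrix m m R := LamR (Ring.inverse (J2 B))

/-- `dom(Φ⁻¹)`: `B ∈ M̂ₙ(R)`, all entries of `B` invertible, `J₂(B)` invertible,
all entries of `J₂(B)⁻¹` invertible. -/
def domPhiInv [Zero m] (B : Matrix m m R) : Prop :=
  Mhat B ∧ (∀ j k, IsUnit (B j k)) ∧ IsUnit (J2 B) ∧ ∀ j k, IsUnit (Ring.inverse (J2 B) j k)

/-- `dom(Φⁿ)` defined recursively. -/
def domPhipow [Zero m] : ℕ → Matrix m m R → Prop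
  | 0, _ => True
  | n + 1, A => domPhi A ∧ domPhipow n (Phi A)

/-- `Ψ = J₂ ∘ Φ ∘ J₂`. -/
noncomputable def Psi [Zero m] (A : Matrix m m R) : Matrix m m R := J2 (Phi (J2 A))

/-- `dom(Ψ)`: `A ∈ M̂ₙ(R)`, all entries of `A` invertible, `J₂(A) ∈ dom(Φ)`. -/
def domPsi [Zero m] (A : Matrix m m R) : Prop :=
  Mhat A ∧ (∀ j k, IsUnit (A j k)) ∧ domPhi (J2 A)

/-- every square submatrix (equinumerous injective choices of rows and columns) is invertible. -/
def allSquareSubInv (M : Matrix (Fin 3) (Fin 3) R) : Prop :=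
  ∀ (k : ℕ) (r c : Fin k → Fin 3), Function.Injective r → Function.Injective c →
    IsUnit (M.submatrix r c)

/-- only the `1×1` and `2×2` submatrices are required to be invertible. -/
def sub12Inv (M : Matrix (Fin 3) (Fin 3) R) : Prop :=
  (∀ j k, IsUnit (M j k)) ∧
  ∀ (r c : Fin 2 → Fin 3), Function.Injective r → Function.Injective c →
    IsUnit (M.submatrix r c)

/-- `S`: all square submatrices of `M` are invertible and `J₂(M)` is invertible. -/
def Sset (R : Type*) [Ring R] : Set (Matrix (Fin 3) (Fin 3) R) :=
  {M | allSquareSubInv M ∧ IsUnit (J2 M)}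

/-- `Ŝ = S ∩ M̂₃(R)`. -/
def Shat (R : Type*) [Ring R] : Set (Matrix (Fin 3) (Fin 3) R) :=
  {M | M ∈ Sset R ∧ Mhat M}

end KontsevichDefs

/-! `Λ^L` and `Λ^R` are two-sided diagonal scalings: `Λ^L(C) = D C E` with `D₀₀ = 1` and
`Λ^R(C) = D C E` with `E₀₀ = 1`. Conversely, rescaling `C` only conjugates `Λ^L(C)` entrywise by
`D₀₀` and `Λ^R(C)` by `E₀₀`, and both maps fix `M̂ₙ(R)`. Hence `J₂(Φ(A)) = Λ^L(A⁻¹) = D A⁻¹ E`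
has inverse `E⁻¹ A D⁻¹`, which `Λ^R` sends back to `A`; symmetrically `Φ ∘ Φ⁻¹ = id`. Since `J₂` is
an involution exchanging `dom(Ψ)` and `dom(Φ⁻¹)` with `dom(Φ)`, `Ψ = J₂ ∘ Φ ∘ J₂` is a bijection
as well, and on the common domain `Ψ(A) = Λ^L(J⁻¹(A))` and `Φ⁻¹(A) = Λ^R(J⁻¹(A))` are both
diagonal scalings of `J⁻¹(A)`. -/

open scoped Ring

theorem Ring.inverse_units_mul_mul_units {M₀ : Type*} [MonoidWithZero M₀] (u v : M₀ˣ) (x : M₀) :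
    (↑u * x * ↑v)⁻¹ʳ = ↑v⁻¹ * x⁻¹ʳ * ↑u⁻¹ := by
  rw [Ring.inverse_mul (Or.inr v.isUnit), Ring.inverse_mul (Or.inl u.isUnit), Ring.inverse_unit,
    Ring.inverse_unit, mul_assoc]

section EntrywiseUnits

variable {R : Type*} [Ring R] {m : Type*}

def UnitEntries (C : Matrix m m R) : Prop :=
  ∀ j k, IsUnit (C j k)

@[simp]
theorem J2_apply (M : Matrix m m R) (j k : m) : J2 M j k = (M k j)⁻¹ʳ := rfl

theorem UnitEntries.J2 {M : Matrix m m R} (hM : UnitEntries M) : UnitEntries (J2 M) :=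
  fun j k => (hM k j).ringInverse

theorem J2_J2 {M : Matrix m m R} (hM : UnitEntries M) : J2 (J2 M) = M := by
  ext j k
  exact Ring.inverse_inverse (hM j k)

theorem Mhat.J2 [Zero m] {M : Matrix m m R} (hM : Mhat M) : Mhat (J2 M) :=
  fun k => by simp [(hM k).1, (hM k).2]

theorem conjEntry_one (A : Matrix m m R) : conjEntry 1 A = A := by
  ext j k
  simp [conjEntry]

end EntrywiseUnits

section DiagonalUnits

variable {R : Type*} [Ring R] {m : Type*} [Fintype m] [DecidableEq m]

def diagonalUnits : (m → Rˣ) →* (Matrix m m R)ˣ :=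
  (Units.map (diagonalRingHom m R).toMonoidHom).comp MulEquiv.piUnits.symm.toMonoidHom

@[simp]
theorem coe_diagonalUnits (d : m → Rˣ) :
    (diagonalUnits d : Matrix m m R) = diagonal fun i => (d i : R) := rfl

@[simp]
theorem diagonalUnits_mul_mul_diagonalUnits_apply (d e : m → Rˣ) (C : Matrix m m R) (j k : m) :
    ((diagonalUnits d : Matrix m m R) * C * (diagonalUnits e : Matrix m m R)) j k =
      d j * C j k * e k := by
  simp [diagonal_mul, mul_diagonal]

theorem simRel_iff {A B : Matrix m m R} :
    simRel A B ↔ ∃ d e : m → Rˣ,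
      B = (diagonalUnits d : Matrix m m R) * A * (diagonalUnits e : Matrix m m R) :=
  ⟨fun ⟨d, e, h⟩ => ⟨d⁻¹, e, h⟩, fun ⟨d, e, h⟩ => ⟨d⁻¹, e, by simpa using h⟩⟩

theorem simRel.symm {A B : Matrix m m R} (h : simRel A B) : simRel B A := by
  obtain ⟨d, e, rfl⟩ := simRel_iff.mp h
  exact simRel_iff.mpr ⟨d⁻¹, e⁻¹, by
    simp only [map_inv, mul_assoc, Units.mul_inv, mul_one, Units.inv_mul_cancel_left]⟩

theorem simRel.trans {A B C : Matrix m m R} (hAB : simRel A B) (hBC : simRel B C) :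
    simRel A C := by
  obtain ⟨d, e, rfl⟩ := simRel_iff.mp hAB
  obtain ⟨d', e', rfl⟩ := simRel_iff.mp hBC
  exact simRel_iff.mpr ⟨d' * d, e * e', by simp only [map_mul, Units.val_mul, mul_assoc]⟩

end DiagonalUnits

section Lambda

variable {R : Type*} [Ring R] {m : Type*} [Zero m]

theorem LamL_of_Mhat {A : Matrix m m R} (hA : Mhat A) : LamL A = A := by
  ext j k
  simp [LamL, (hA 0).1, (hA j).2, (hA k).1]

theorem LamR_of_Mhat {A : Matrix m m R} (hA : Mhat A) : LamR A = A := by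
  ext j k
  simp [LamR, (hA 0).1, (hA j).2, (hA k).1]

theorem Mhat_LamL {C : Matrix m m R} (hC : UnitEntries C) : Mhat (LamL C) := fun k => by
  simp only [LamL, of_apply, mul_assoc, Ring.inverse_mul_cancel_left _ _ (hC k 0),
    Ring.mul_inverse_cancel_left _ _ (hC 0 0), Ring.mul_inverse_cancel _ (hC 0 k),
    Ring.mul_inverse_cancel _ (hC 0 0), and_self]

theorem Mhat_LamR {C : Matrix m m R} (hC : UnitEntries C) : Mhat (LamR C) := fun k => by
  simp only [LamR, of_apply, Ring.inverse_mul_cancel_right _ _ (hC 0 0),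
    Ring.mul_inverse_cancel_right _ _ (hC 0 k), Ring.inverse_mul_cancel _ (hC k 0),
    Ring.inverse_mul_cancel _ (hC 0 0), and_self]

variable [Fintype m] [DecidableEq m]

theorem LamL_diagonalUnits_mul_mul (d e : m → Rˣ) (C : Matrix m m R) :
    LamL ((diagonalUnits d : Matrix m m R) * C * (diagonalUnits e : Matrix m m R)) =
      conjEntry (d 0)⁻¹ (LamL C) := by
  ext j k
  simp only [LamL, conjEntry, of_apply, diagonalUnits_mul_mul_diagonalUnits_apply,
    Ring.inverse_units_mul_mul_units]
  simp [mul_assoc]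

theorem LamR_diagonalUnits_mul_mul (d e : m → Rˣ) (C : Matrix m m R) :
    LamR ((diagonalUnits d : Matrix m m R) * C * (diagonalUnits e : Matrix m m R)) =
      conjEntry (e 0) (LamR C) := by
  ext j k
  simp only [LamR, conjEntry, of_apply, diagonalUnits_mul_mul_diagonalUnits_apply,
    Ring.inverse_units_mul_mul_units]
  simp [mul_assoc]

theorem LamL_eq_diagonalUnits_mul_mul {C : Matrix m m R} (hC : UnitEntries C) :
    ∃ d e : m → Rˣ, d 0 = 1 ∧
      LamL C = (diagonalUnits d : Matrix m m R) * C * (diagonalUnits e : Matrix m m R) := by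
  choose u hu using hC
  refine ⟨fun j => u 0 0 * (u j 0)⁻¹, fun k => (u 0 k)⁻¹, mul_inv_cancel _, ?_⟩
  ext j k
  simp [LamL, ← hu]

theorem LamR_eq_diagonalUnits_mul_mul {C : Matrix m m R} (hC : UnitEntries C) :
    ∃ d e : m → Rˣ, e 0 = 1 ∧
      LamR C = (diagonalUnits d : Matrix m m R) * C * (diagonalUnits e : Matrix m m R) := by
  choose u hu using hC
  refine ⟨fun j => (u j 0)⁻¹, fun k => (u 0 k)⁻¹ * u 0 0, inv_mul_cancel _, ?_⟩
  ext j k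
  simp [LamR, ← hu, mul_assoc]

end Lambda

section Scaling

variable {R : Type*} [Ring R] {m : Type*} [Fintype m] [DecidableEq m]

def UnitEntriesAndInv (C : Matrix m m R) : Prop :=
  UnitEntries C ∧ IsUnit C ∧ UnitEntries C⁻¹ʳ

theorem UnitEntriesAndInv.ringInverse {C : Matrix m m R} (h : UnitEntriesAndInv C) :
    UnitEntriesAndInv C⁻¹ʳ :=
  ⟨h.2.2, h.2.1.ringInverse, by rw [Ring.inverse_inverse h.2.1]; exact h.1⟩

theorem UnitEntries.diagonalUnits_mul_mul {C : Matrix m m R} (h : UnitEntries C) (d e : m → Rˣ) :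
    UnitEntries ((diagonalUnits d : Matrix m m R) * C * (diagonalUnits e : Matrix m m R)) :=
  fun j k => by
    rw [diagonalUnits_mul_mul_diagonalUnits_apply]
    exact ((d j).isUnit.mul (h j k)).mul (e k).isUnit

theorem UnitEntriesAndInv.diagonalUnits_mul_mul {C : Matrix m m R} (h : UnitEntriesAndInv C)
    (d e : m → Rˣ) :
    UnitEntriesAndInv ((diagonalUnits d : Matrix m m R) * C * (diagonalUnits e : Matrix m m R)) :=
  ⟨h.1.diagonalUnits_mul_mul d e, ((diagonalUnits d).isUnit.mul h.2.1).mul (diagonalUnits e).isUnit,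
    by
      rw [Ring.inverse_units_mul_mul_units, ← map_inv, ← map_inv]
      exact h.2.2.diagonalUnits_mul_mul e⁻¹ d⁻¹⟩

variable [Zero m]

theorem UnitEntriesAndInv.domPhi_LamL {C : Matrix m m R} (h : UnitEntriesAndInv C) :
    domPhi (LamL C) := by
  obtain ⟨d, e, -, hL⟩ := LamL_eq_diagonalUnits_mul_mul h.1
  exact ⟨Mhat_LamL h.1, hL ▸ h.diagonalUnits_mul_mul d e⟩

theorem UnitEntriesAndInv.domPhi_LamR {C : Matrix m m R} (h : UnitEntriesAndInv C) :
    domPhi (LamR C) := by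
  obtain ⟨d, e, -, hR⟩ := LamR_eq_diagonalUnits_mul_mul h.1
  exact ⟨Mhat_LamR h.1, hR ▸ h.diagonalUnits_mul_mul d e⟩

theorem simRel_LamL {C : Matrix m m R} (hC : UnitEntries C) : simRel C (LamL C) := by
  obtain ⟨d, e, -, hL⟩ := LamL_eq_diagonalUnits_mul_mul hC
  exact simRel_iff.mpr ⟨d, e, hL⟩

theorem simRel_LamR {C : Matrix m m R} (hC : UnitEntries C) : simRel C (LamR C) := by
  obtain ⟨d, e, -, hR⟩ := LamR_eq_diagonalUnits_mul_mul hC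
  exact simRel_iff.mpr ⟨d, e, hR⟩

end Scaling

section Phi

variable {R : Type*} [Ring R] {m : Type*} [Fintype m] [DecidableEq m] [Zero m]

theorem domPhi.unitEntriesAndInv {A : Matrix m m R} (h : domPhi A) : UnitEntriesAndInv A := h.2

theorem domPhi.unitEntries {A : Matrix m m R} (h : domPhi A) : UnitEntries A := h.2.1

theorem domPhiInv.unitEntries {B : Matrix m m R} (h : domPhiInv B) : UnitEntries B := h.2.1

theorem domPhi.domPhiInv_J2 {P : Matrix m m R} (h : domPhi P) : domPhiInv (J2 P) :=
  ⟨h.1.J2, h.unitEntries.J2, by rw [J2_J2 h.unitEntries]; exact h.2.2⟩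

theorem domPhiInv.domPhi_J2 {B : Matrix m m R} (h : domPhiInv B) : domPhi (J2 B) :=
  ⟨h.1.J2, h.unitEntries.J2, h.2.2⟩

theorem domPhi.domPsi_J2 {P : Matrix m m R} (h : domPhi P) : domPsi (J2 P) :=
  ⟨h.1.J2, h.unitEntries.J2, by rw [J2_J2 h.unitEntries]; exact h⟩

theorem domPsi_iff_domPhiInv {A : Matrix m m R} : domPsi A ↔ domPhiInv A :=
  ⟨fun ⟨hM, hA, hJ⟩ => ⟨hM, hA, hJ.2.2⟩,
    fun ⟨hM, hA, hJ⟩ => ⟨hM, hA, hM.J2, UnitEntries.J2 hA, hJ⟩⟩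

theorem domPhi.domPhiInv_Phi {A : Matrix m m R} (h : domPhi A) : domPhiInv (Phi A) :=
  h.unitEntriesAndInv.ringInverse.domPhi_LamL.domPhiInv_J2

theorem domPhiInv.domPhi_PhiInv {B : Matrix m m R} (h : domPhiInv B) : domPhi (PhiInv B) :=
  h.domPhi_J2.unitEntriesAndInv.ringInverse.domPhi_LamR

theorem PhiInv_Phi {A : Matrix m m R} (h : domPhi A) : PhiInv (Phi A) = A := by
  have hA' := h.unitEntriesAndInv.ringInverse
  obtain ⟨d, e, hd, hL⟩ := LamL_eq_diagonalUnits_mul_mul hA'.1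
  rw [PhiInv, Phi, J2_J2 hA'.domPhi_LamL.unitEntries, hL, Ring.inverse_units_mul_mul_units,
    Ring.inverse_inverse h.2.2.1, ← map_inv, ← map_inv, LamR_diagonalUnits_mul_mul, Pi.inv_apply,
    hd, inv_one, conjEntry_one, LamR_of_Mhat h.1]

theorem Phi_PhiInv {B : Matrix m m R} (h : domPhiInv B) : Phi (PhiInv B) = B := by
  obtain ⟨d, e, he, hR⟩ :=
    LamR_eq_diagonalUnits_mul_mul h.domPhi_J2.unitEntriesAndInv.ringInverse.1
  rw [Phi, PhiInv, hR, Ring.inverse_units_mul_mul_units, Ring.inverse_inverse h.2.2.1, ← map_inv,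
    ← map_inv, LamL_diagonalUnits_mul_mul, Pi.inv_apply, he, inv_one, inv_one, conjEntry_one,
    LamL_of_Mhat h.1.J2, J2_J2 h.unitEntries]

theorem bijOn_Phi : Set.BijOn Phi {A : Matrix m m R | domPhi A} {B | domPhiInv B} :=
  Set.InvOn.bijOn ⟨fun _ hA => PhiInv_Phi hA, fun _ hB => Phi_PhiInv hB⟩
    (fun _ hA => hA.domPhiInv_Phi) (fun _ hB => hB.domPhi_PhiInv)

theorem bijOn_PhiInv : Set.BijOn PhiInv {B : Matrix m m R | domPhiInv B} {A | domPhi A} :=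
  Set.InvOn.bijOn ⟨fun _ hB => Phi_PhiInv hB, fun _ hA => PhiInv_Phi hA⟩
    (fun _ hB => hB.domPhi_PhiInv) (fun _ hA => hA.domPhiInv_Phi)

theorem bijOn_J2_domPsi : Set.BijOn J2 {A : Matrix m m R | domPsi A} {P | domPhi P} :=
  Set.InvOn.bijOn ⟨fun _ hA => J2_J2 hA.2.1, fun _ hP => J2_J2 hP.2.1⟩
    (fun _ hA => hA.2.2) (fun _ hP => hP.domPsi_J2)

theorem bijOn_J2_domPhiInv : Set.BijOn J2 {B : Matrix m m R | domPhiInv B} {P | domPhi P} :=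
  Set.InvOn.bijOn ⟨fun _ hB => J2_J2 hB.2.1, fun _ hP => J2_J2 hP.2.1⟩
    (fun _ hB => hB.domPhi_J2) (fun _ hP => hP.domPhiInv_J2)

theorem bijOn_Psi : Set.BijOn Psi {A : Matrix m m R | domPsi A} {P | domPhi P} :=
  bijOn_J2_domPhiInv.comp (bijOn_Phi.comp bijOn_J2_domPsi)

theorem Psi_eq_LamL_JinvMap {A : Matrix m m R} (h : domPsi A) : Psi A = LamL (JinvMap A) := by
  rw [Psi, Phi, J2_J2 h.2.2.unitEntriesAndInv.ringInverse.domPhi_LamL.unitEntries, JinvMap]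

end Phi

/-- `Ψ = J₂ ∘ Φ ∘ J₂` and `Φ⁻¹` have the same domain, which both map
bijectively onto `dom(Φ)`, and `Ψ(A) ∼ Φ⁻¹(A)` for every `A` in this common domain;
consequently `Ψ(A) ∼ Φ⁻¹(A) ∼ J⁻¹(A)`. -/
theorem psi_phiinv_equivalent {R : Type*} [Ring R] (n : ℕ) :
    (∀ A : Matrix (Fin (n + 1)) (Fin (n + 1)) R, domPsi A ↔ domPhiInv A) ∧
    Set.BijOn Psi {A : Matrix (Fin (n + 1)) (Fin (n + 1)) R | domPsi A} {A | domPhi A} ∧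
    Set.BijOn PhiInv {A : Matrix (Fin (n + 1)) (Fin (n + 1)) R | domPhiInv A} {A | domPhi A} ∧
    (∀ A : Matrix (Fin (n + 1)) (Fin (n + 1)) R, domPsi A →
      simRel (PhiInv A) (Psi A) ∧ simRel (JinvMap A) (PhiInv A) ∧
        simRel (JinvMap A) (Psi A)) := by
  refine ⟨fun _ => domPsi_iff_domPhiInv, bijOn_Psi, bijOn_PhiInv, fun A hA => ?_⟩
  have hC : UnitEntries (JinvMap A) := (domPsi_iff_domPhiInv.mp hA).2.2.2
  have hPsi : simRel (JinvMap A) (Psi A) := Psi_eq_LamL_JinvMap hA ▸ simRel_LamL hC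
  have hPhiInv : simRel (JinvMap A) (PhiInv A) := simRel_LamR hC
  exact ⟨hPhiInv.symm.trans hPsi, hPhiInv, hPsi⟩
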